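/- arXiv:1512.07553 — 5 statements merged into one kernel-verified Lean document; each statement's English description precedes it below -/
import Mathlib

section
/- Let H₊ and H₋ be complex Hilbert spaces, let H := H₊ × H₋ be their Hilbert space direct sum, and let V : H₋ → H₊ be a bounded linear operator with adjoint V*. Define the bounded operator L on H by L(f, h) = (V h, −V* f). Then 1 + L is invertible; moreover, writing K := L ∘ (1 + L)⁻¹ and defining K̂ : H → H by K̂(f, h) := (π₊(K(f, h)), h − π₋(K(f, h))) (where π₊ and π₋ are the coordinate projections of H onto H₊ and H₋), the operator K̂ is an orthogonal projection (self-adjoint and idempotent), its range equals {(V h, h) : h ∈ H₋}, and the orthogonal complement of its range equals {(f, −V* f) : f ∈ H₊}. -/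
/-!
`L` is skew-adjoint, so `(1 + L)(1 - L) = 1 + L*L` is invertible, and since the two factors
commute so is `1 + L`. Writing `y = (1 + L)⁻¹ x`, i.e. `x = y + L y`, the definition unwinds to
`K̂ x = (V y₂, y₂)`, and `(1 + L)⁻¹ (V h, h) = (0, h)` shows that `K̂` fixes the graph of `V`.
Symmetry of `K̂` comes from `⟪(V h, h), y + L y⟫ = ⟪V h, V y₂⟫ + ⟪h, y₂⟫`, in which the
cross terms `⟪V h, y₁⟫` cancel. Finally `(f, g) ⊥ (V h, h)` for all `h` means `V* f + g = 0`.
-/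

open ContinuousLinearMap WithLp
open scoped InnerProductSpace

theorem isUnit_one_add_of_star_eq_neg {A : Type*} [CStarAlgebra A] [PartialOrder A]
    [StarOrderedRing A] {a : A} (ha : star a = -a) : IsUnit (1 + a) := by
  have hcomm : Commute (1 + a) (1 - a) := by
    show (1 + a) * (1 - a) = (1 - a) * (1 + a)
    noncomm_ring
  have hprod : (1 + a) * (1 - a) = 1 + star a * a := by
    rw [ha]
    noncomm_ring
  have hunit : IsUnit ((1 + a) * (1 - a)) :=
    hprod ▸ (isStrictlyPositive_one.add_nonneg (star_mul_self_nonneg a)).isUnit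
  exact (hcomm.isUnit_mul_iff.1 hunit).1

section

variable {R E : Type*} [Semiring R] [TopologicalSpace E] [AddCommMonoid E] [ContinuousAdd E]
  [Module R E] {L : E →L[R] E}

theorem inverse_one_add_apply_add_apply_inverse (hU : IsUnit (1 + L)) (x : E) :
    Ring.inverse (1 + L) x + L (Ring.inverse (1 + L) x) = x := by
  simpa using congr($(Ring.mul_inverse_cancel _ hU) x)

theorem inverse_one_add_apply_self_add_apply (hU : IsUnit (1 + L)) (y : E) :
    Ring.inverse (1 + L) (y + L y) = y := by
  simpa using congr($(Ring.inverse_mul_cancel _ hU) y)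

end

section

variable {Hp Hm : Type*}
  [NormedAddCommGroup Hp] [InnerProductSpace ℂ Hp] [CompleteSpace Hp]
  [NormedAddCommGroup Hm] [InnerProductSpace ℂ Hm] [CompleteSpace Hm]
  {V : Hm →L[ℂ] Hp} {L P : WithLp 2 (Hp × Hm) →L[ℂ] WithLp 2 (Hp × Hm)}

theorem coe_orthogonal_eq_of_coe_eq_graph {W : Submodule ℂ (WithLp 2 (Hp × Hm))}
    (hW : (W : Set (WithLp 2 (Hp × Hm))) = {x | ∃ h : Hm, x = toLp 2 (V h, h)}) :
    (Wᗮ : Set (WithLp 2 (Hp × Hm))) = {x | ∃ f : Hp, x = toLp 2 (f, -adjoint V f)} := by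
  have hmem : ∀ h : Hm, toLp 2 (V h, h) ∈ W := fun h => by
    rw [← SetLike.mem_coe, hW]
    exact ⟨h, rfl⟩
  ext x
  simp only [SetLike.mem_coe, Submodule.mem_orthogonal, Set.mem_ofPred_eq]
  constructor
  · intro hx
    have hperp : ∀ h : Hm, ⟪h, adjoint V x.fst + x.snd⟫_ℂ = 0 := fun h => by
      simpa [inner_add_right, adjoint_inner_right] using hx _ (hmem h)
    have hsnd : x.snd = -adjoint V x.fst :=
      eq_neg_of_add_eq_zero_right (inner_self_eq_zero.1 (hperp _))
    exact ⟨x.fst, by rw [← hsnd]; rfl⟩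
  · rintro ⟨f, rfl⟩ u hu
    rw [← SetLike.mem_coe, hW] at hu
    obtain ⟨h, rfl⟩ := hu
    simp [inner_neg_right, adjoint_inner_right]

variable (hL : ∀ x, L x = toLp 2 (V x.snd, -adjoint V x.fst))
include hL

theorem star_eq_neg_of_apply_eq : star L = -L := by
  rw [star_eq_adjoint, eq_comm, eq_adjoint_iff]
  intro x y
  simp [hL, inner_neg_left, inner_neg_right, adjoint_inner_left, adjoint_inner_right]

variable (hU : IsUnit (1 + L))
include hU

theorem inverse_one_add_apply_toLp_graph (h : Hm) :
    Ring.inverse (1 + L) (toLp 2 (V h, h)) = toLp 2 (0, h) := by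
  have hsplit : toLp 2 (V h, h) = toLp 2 (0, h) + L (toLp 2 (0, h)) := by
    simp [hL, ← WithLp.toLp_add]
  rw [hsplit, inverse_one_add_apply_self_add_apply hU]

theorem inner_toLp_graph_eq_inner_toLp_graph_inverse (h : Hm) (y : WithLp 2 (Hp × Hm)) :
    ⟪toLp 2 (V h, h), y⟫_ℂ = ⟪toLp 2 (V h, h),
      toLp 2 (V (Ring.inverse (1 + L) y).snd, (Ring.inverse (1 + L) y).snd)⟫_ℂ := by
  conv_lhs => rw [← inverse_one_add_apply_add_apply_inverse hU y]
  simp only [hL, inner_add_right, prod_inner_apply, ofLp_fst, ofLp_snd, inner_neg_right,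
    adjoint_inner_right]
  ring

theorem apply_eq_toLp_graph_inverse
    (hKhat : ∀ x, P x = toLp 2 ((L (Ring.inverse (1 + L) x)).fst,
      x.snd - (L (Ring.inverse (1 + L) x)).snd)) (x : WithLp 2 (Hp × Hm)) :
    P x = toLp 2 (V (Ring.inverse (1 + L) x).snd, (Ring.inverse (1 + L) x).snd) := by
  have hsnd := congr(($(inverse_one_add_apply_add_apply_inverse hU x)).snd)
  rw [hKhat, ← hsnd, hL]
  simp

variable (hP : ∀ x, P x = toLp 2 (V (Ring.inverse (1 + L) x).snd, (Ring.inverse (1 + L) x).snd))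
include hP

theorem isSelfAdjoint_of_apply_eq_toLp_graph_inverse : IsSelfAdjoint P := by
  have hsym : ∀ x y, ⟪P x, y⟫_ℂ = ⟪P x, P y⟫_ℂ := fun x y => by
    rw [hP x, hP y]
    exact inner_toLp_graph_eq_inner_toLp_graph_inverse hL hU _ y
  rw [isSelfAdjoint_iff_isSymmetric]
  intro x y
  change ⟪P x, y⟫_ℂ = ⟪x, P y⟫_ℂ
  rw [hsym, ← inner_conj_symm, ← hsym, inner_conj_symm]

theorem apply_toLp_graph_of_apply_eq_toLp_graph_inverse (h : Hm) :
    P (toLp 2 (V h, h)) = toLp 2 (V h, h) := by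
  simp [hP, inverse_one_add_apply_toLp_graph hL hU]

theorem comp_self_of_apply_eq_toLp_graph_inverse : P ∘L P = P := by
  ext x
  rw [comp_apply, hP x, apply_toLp_graph_of_apply_eq_toLp_graph_inverse hL hU hP]

theorem coe_range_of_apply_eq_toLp_graph_inverse :
    (LinearMap.range (P : WithLp 2 (Hp × Hm) →ₗ[ℂ] WithLp 2 (Hp × Hm)) : Set (WithLp 2 (Hp × Hm)))
      = {x | ∃ h : Hm, x = toLp 2 (V h, h)} := by
  ext x
  constructor
  · rintro ⟨y, rfl⟩
    exact ⟨_, hP y⟩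
  · rintro ⟨h, rfl⟩
    exact ⟨_, apply_toLp_graph_of_apply_eq_toLp_graph_inverse hL hU hP h⟩

end

open ContinuousLinearMap in
/-- For `L(f,h) = (Vh, -V*f)` on the Hilbert direct sum `H₊ ⊕ H₋`, the operator
`1 + L` is invertible, and with `K = L(1+L)⁻¹`, the operator
`K̂(f,h) = (π₊ K(f,h), h - π₋ K(f,h))` is an orthogonal projection with range
`{(Vh, h)}` and orthocomplement `{(f, -V*f)}`. -/
theorem balanced_rigidity_stmt0
    {Hp Hm : Type*}
    [NormedAddCommGroup Hp] [InnerProductSpace ℂ Hp] [CompleteSpace Hp]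
    [NormedAddCommGroup Hm] [InnerProductSpace ℂ Hm] [CompleteSpace Hm]
    (V : Hm →L[ℂ] Hp)
    (L : WithLp 2 (Hp × Hm) →L[ℂ] WithLp 2 (Hp × Hm))
    (hL : ∀ x : WithLp 2 (Hp × Hm),
      L x = (WithLp.equiv 2 (Hp × Hm)).symm (V x.snd, -(adjoint V) x.fst)) :
    IsUnit (1 + L) ∧
    ∀ K Khat : WithLp 2 (Hp × Hm) →L[ℂ] WithLp 2 (Hp × Hm),
      K = L ∘L Ring.inverse (1 + L) →
      (∀ x : WithLp 2 (Hp × Hm),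
        Khat x = (WithLp.equiv 2 (Hp × Hm)).symm ((K x).fst, x.snd - (K x).snd)) →
      IsSelfAdjoint Khat ∧
      Khat ∘L Khat = Khat ∧
      (LinearMap.range (Khat : WithLp 2 (Hp × Hm) →ₗ[ℂ] WithLp 2 (Hp × Hm)) : Set (WithLp 2 (Hp × Hm)))
        = {x : WithLp 2 (Hp × Hm) | ∃ h : Hm,
            x = (WithLp.equiv 2 (Hp × Hm)).symm (V h, h)} ∧
      ((LinearMap.range (Khat : WithLp 2 (Hp × Hm) →ₗ[ℂ] WithLp 2 (Hp × Hm)))ᗮ : Set (WithLp 2 (Hp × Hm)))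
        = {x : WithLp 2 (Hp × Hm) | ∃ f : Hp,
            x = (WithLp.equiv 2 (Hp × Hm)).symm (f, -(adjoint V) f)} := by
  have hU : IsUnit (1 + L) := isUnit_one_add_of_star_eq_neg (star_eq_neg_of_apply_eq hL)
  refine ⟨hU, fun K Khat hK hKhat => ?_⟩
  subst hK
  have hKhat' := apply_eq_toLp_graph_inverse hL hU hKhat
  have hrange := coe_range_of_apply_eq_toLp_graph_inverse hL hU hKhat'
  exact ⟨isSelfAdjoint_of_apply_eq_toLp_graph_inverse hL hU hKhat',
    comp_self_of_apply_eq_toLp_graph_inverse hL hU hKhat', hrange,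
    coe_orthogonal_eq_of_coe_eq_graph hrange⟩
end

section
/- Let H be a complex Hilbert space and let L be a bounded skew-adjoint operator on H, i.e. L* = −L. Then 1 + L is invertible and the operator norm of L ∘ (1 + L)⁻¹ satisfies ‖L ∘ (1 + L)⁻¹‖ ≤ ‖L‖ / √(1 + ‖L‖²); in particular ‖L ∘ (1 + L)⁻¹‖ < 1. -/
/-!
Since `I • L` is self-adjoint, the spectrum of the skew-adjoint `L` lies on the imaginary axis,
so `-1 ∉ σ(L)` and `1 + L` is invertible. Skew-adjointness also gives `re ⟪x, L x⟫ = 0`, hence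
`‖x + L x‖² = ‖x‖² + ‖L x‖²`. Writing `y = (1 + L) x` and `N = ‖L‖`, this turns
`‖L x‖² ≤ N² ‖x‖² = N² (‖y‖² - ‖L x‖²)` into `‖L x‖ ≤ N / √(1 + N²) · ‖y‖`.
-/

theorem div_sqrt_one_add_sq_lt_one (N : ℝ) : N / √(1 + N ^ 2) < 1 :=
  (div_lt_one (by positivity)).mpr (Real.lt_sqrt_of_sq_lt (by linarith))

theorem le_div_sqrt_one_add_sq_mul {a b c N : ℝ} (ha : 0 ≤ a) (hN : 0 ≤ N) (hc : 0 ≤ c)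
    (hab : a ≤ N * b) (hcab : c ^ 2 = b ^ 2 + a ^ 2) : a ≤ N / √(1 + N ^ 2) * c := by
  have hs : √(1 + N ^ 2) ^ 2 = 1 + N ^ 2 := Real.sq_sqrt (by positivity)
  rw [div_mul_eq_mul_div, le_div_iff₀ (by positivity),
    ← pow_le_pow_iff_left₀ (by positivity) (by positivity) two_ne_zero]
  nlinarith [mul_pow a (√(1 + N ^ 2)) 2, mul_pow N c 2, mul_self_le_mul_self ha hab]

section CStarAlgebra

variable {A : Type*} [CStarAlgebra A] {a : A}

open Complex in
theorem re_eq_zero_of_mem_spectrum_of_mem_skewAdjoint (ha : a ∈ skewAdjoint A) {z : ℂ}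
    (hz : z ∈ spectrum ℂ a) : z.re = 0 := by
  have hI : I ∈ skewAdjoint ℂ := skewAdjoint.mem_iff.mpr conj_I
  have hIz : (Units.mk0 I I_ne_zero) • z ∈ spectrum ℂ ((Units.mk0 I I_ne_zero) • a) :=
    spectrum.smul_mem_smul_iff.mpr hz
  simpa using (isSelfAdjoint_smul_of_mem_skewAdjoint hI ha).im_eq_zero_of_mem_spectrum hIz

theorem isUnit_one_add_of_mem_skewAdjoint (ha : a ∈ skewAdjoint A) : IsUnit (1 + a) := by
  have h : (-1 : ℂ) ∉ spectrum ℂ a := fun h ↦ by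
    simpa using re_eq_zero_of_mem_spectrum_of_mem_skewAdjoint ha h
  rw [spectrum.notMem_iff, ← IsUnit.neg_iff] at h
  simpa [neg_sub, add_comm] using h

end CStarAlgebra

section SkewAdjointOperator

variable {𝕜 E : Type*} [RCLike 𝕜] [NormedAddCommGroup E] [InnerProductSpace 𝕜 E]
  [CompleteSpace E] {L : E →L[𝕜] E}

theorem re_inner_self_apply_eq_zero_of_adjoint_eq_neg (hL : L.adjoint = -L) (x : E) :
    RCLike.re (inner 𝕜 x (L x)) = 0 := by
  have h : inner 𝕜 x (L x) = -inner 𝕜 (L x) x := by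
    rw [← L.adjoint_inner_left, hL, neg_apply, inner_neg_left]
  have hre := congrArg RCLike.re h
  rw [map_neg, ← inner_conj_symm (L x) x, RCLike.conj_re] at hre
  linarith

theorem norm_add_apply_sq_of_adjoint_eq_neg (hL : L.adjoint = -L) (x : E) :
    ‖x + L x‖ ^ 2 = ‖x‖ ^ 2 + ‖L x‖ ^ 2 := by
  rw [@norm_add_sq 𝕜, re_inner_self_apply_eq_zero_of_adjoint_eq_neg hL]
  ring

theorem norm_comp_inverse_one_add_le_of_adjoint_eq_neg (hL : L.adjoint = -L)
    (hU : IsUnit (1 + L)) : ‖L ∘L Ring.inverse (1 + L)‖ ≤ ‖L‖ / √(1 + ‖L‖ ^ 2) := by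
  refine ContinuousLinearMap.opNorm_le_bound _ (by positivity) fun y ↦ ?_
  set x := Ring.inverse (1 + L) y
  have hy : x + L x = y := by
    change ((1 + L) * Ring.inverse (1 + L)) y = y
    rw [Ring.mul_inverse_cancel _ hU, one_apply_eq_self]
  change ‖L x‖ ≤ _
  refine le_div_sqrt_one_add_sq_mul (norm_nonneg _) (norm_nonneg _) (norm_nonneg _)
    (L.le_opNorm x) ?_
  rw [← hy, norm_add_apply_sq_of_adjoint_eq_neg hL]

end SkewAdjointOperator

/-- If `L` is a bounded skew-adjoint operator on a complex Hilbert space, then `1 + L`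
is invertible and `‖L(1+L)⁻¹‖ ≤ ‖L‖ / √(1 + ‖L‖²) < 1`. -/
theorem balanced_rigidity_stmt2
    {H : Type*} [NormedAddCommGroup H] [InnerProductSpace ℂ H] [CompleteSpace H]
    (L : H →L[ℂ] H) (hskew : ContinuousLinearMap.adjoint L = -L) :
    IsUnit (1 + L) ∧
    ‖L ∘L Ring.inverse (1 + L)‖ ≤ ‖L‖ / Real.sqrt (1 + ‖L‖ ^ 2) ∧
    ‖L ∘L Ring.inverse (1 + L)‖ < 1 := by
  have hU : IsUnit (1 + L) := isUnit_one_add_of_mem_skewAdjoint (skewAdjoint.mem_iff.mpr hskew)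
  have hle := norm_comp_inverse_one_add_le_of_adjoint_eq_neg hskew hU
  exact ⟨hU, hle, hle.trans_lt (div_sqrt_one_add_sq_lt_one ‖L‖)⟩
end

section
/- Let R be a (not necessarily commutative) unital ring and let g, L ∈ R be such that 1 + L and 1 + gLg are units of R. Set K := L(1 + L)⁻¹. Then 1 + (g² − 1)K is a unit of R and gLg(1 + gLg)⁻¹ = gK(1 + (g² − 1)K)⁻¹g. -/
/-!
Writing `A = 1 + L`, the element `1 + (g² - 1)K` factors as `(1 + g²L)A⁻¹`, and `1 + g²L` is a
unit together with `1 + gLg` by Jacobson's lemma (`1 + ab` is a unit iff `1 + ba` is). Hence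
`gK(1 + (g² - 1)K)⁻¹g = gL(1 + g²L)⁻¹g`, and the push-through identity
`g(1 + gLg)⁻¹ = (1 + g²L)⁻¹g` turns this into `gLg(1 + gLg)⁻¹`.
-/

open scoped Ring

theorem SemiconjBy.ringInverse {M₀ : Type*} [MonoidWithZero M₀] {a x y : M₀}
    (hx : IsUnit x) (hy : IsUnit y) (h : SemiconjBy a x y) : SemiconjBy a x⁻¹ʳ y⁻¹ʳ := by
  obtain ⟨u, rfl⟩ := hx
  obtain ⟨v, rfl⟩ := hy
  rw [Ring.inverse_unit, Ring.inverse_unit]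
  exact h.units_inv_right

section Ring

variable {R : Type*} [Ring R]

/-- Jacobson's lemma: the inverse of `1 + ba` is `1 - b(1 + ab)⁻¹a`. -/
theorem IsUnit.one_add_mul_swap {a b : R} (h : IsUnit (1 + a * b)) : IsUnit (1 + b * a) := by
  obtain ⟨u, hu⟩ := h
  refine ⟨⟨1 + b * a, 1 - b * ↑u⁻¹ * a, ?_, ?_⟩, rfl⟩
  · calc (1 + b * a) * (1 - b * ↑u⁻¹ * a) = 1 + b * a - b * ((1 + a * b) * ↑u⁻¹) * a := by
          noncomm_ring
      _ = 1 := by rw [← hu, Units.mul_inv]; noncomm_ring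
  · calc (1 - b * ↑u⁻¹ * a) * (1 + b * a) = 1 + b * a - b * (↑u⁻¹ * (1 + a * b)) * a := by
          noncomm_ring
      _ = 1 := by rw [← hu, Units.inv_mul]; noncomm_ring

theorem Ring.mul_inverse_one_add_mul (a b : R) (h : IsUnit (1 + b * a)) :
    a * (1 + b * a)⁻¹ʳ = (1 + a * b)⁻¹ʳ * a := by
  have hab : SemiconjBy a (1 + b * a) (1 + a * b) := by
    simp only [SemiconjBy, mul_add, add_mul, mul_one, one_mul, mul_assoc]
  exact hab.ringInverse h h.one_add_mul_swap

theorem one_add_sub_one_mul_mul_inverse {c L : R} (hL : IsUnit (1 + L)) :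
    1 + (c - 1) * (L * (1 + L)⁻¹ʳ) = (1 + c * L) * (1 + L)⁻¹ʳ := by
  calc 1 + (c - 1) * (L * (1 + L)⁻¹ʳ) = (1 + L) * (1 + L)⁻¹ʳ + (c - 1) * L * (1 + L)⁻¹ʳ := by
        rw [Ring.mul_inverse_cancel _ hL, mul_assoc]
    _ = (1 + c * L) * (1 + L)⁻¹ʳ := by noncomm_ring

end Ring

/-- In a unital ring, if `1 + L` and `1 + gLg` are units and `K = L(1+L)⁻¹`, then
`1 + (g² - 1)K` is a unit and `gLg(1+gLg)⁻¹ = gK(1+(g²-1)K)⁻¹g`. -/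
theorem balanced_rigidity_stmt6
    {R : Type*} [Ring R] (g L : R)
    (hL : IsUnit (1 + L)) (hgLg : IsUnit (1 + g * L * g)) :
    IsUnit (1 + (g ^ 2 - 1) * (L * Ring.inverse (1 + L))) ∧
    g * L * g * Ring.inverse (1 + g * L * g)
      = g * (L * Ring.inverse (1 + L))
          * Ring.inverse (1 + (g ^ 2 - 1) * (L * Ring.inverse (1 + L))) * g := by
  have hg2L : g ^ 2 * L = g * (g * L) := by rw [pow_two, mul_assoc]
  have hunit : IsUnit (1 + g ^ 2 * L) := hg2L ▸ hgLg.one_add_mul_swap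
  rw [one_add_sub_one_mul_mul_inverse hL]
  refine ⟨hunit.mul hL.ringInverse, ?_⟩
  rw [Ring.inverse_mul (Or.inl hunit), Ring.inverse_inverse hL, hg2L]
  calc g * L * g * (1 + g * L * g)⁻¹ʳ = g * L * (g * (1 + g * L * g)⁻¹ʳ) := by
        rw [mul_assoc]
    _ = g * L * ((1 + g * (g * L))⁻¹ʳ * g) := by rw [Ring.mul_inverse_one_add_mul g (g * L) hgLg]
    _ = g * (L * (1 + L)⁻¹ʳ) * ((1 + L) * (1 + g * (g * L))⁻¹ʳ) * g := by
        simp only [mul_assoc, Ring.inverse_mul_cancel_left _ _ hL]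
end

section
/- Let Φ ∈ L¹(ℝ) be nonnegative and suppose there exists C₀ > 0 such that ∫_{|t| ≥ R} Φ(t) dt ≤ C₀/R for all R ≥ 1. Then there exists a constant C > 0 (depending only on C₀ and ∫_ℝ Φ) such that for all ξ ∈ ℝ: ∫_ℝ |e^{2πi t ξ} − 1|² Φ(t) dt ≤ C |ξ|. -/
/-!
The weight `|e^{iθ} - 1|²` is at most `min (θ², 4)`. Splitting the integral at `|t| = 1/|ξ|`
bounds it by `4π²ξ² ∫_{|t|<1/|ξ|} t² Φ + 4 ∫_{|t|≥1/|ξ|} Φ`. The tail hypothesis bounds the second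
term by `4 C₀ |ξ|`; summed over the dyadic shells `2^k ≤ |t| < 2^(k+1)`, where `t² ≤ 4^(k+1)`, it
also makes the truncated second moment `∫_{|t|<R} t² Φ` grow at most linearly in `R`, so the first
term is `O(|ξ|)` too. For `|ξ| ≥ 1` the trivial bound `4 ∫ Φ` suffices.
-/

open MeasureTheory Set

namespace Complex

lemma norm_exp_ofReal_mul_I_sub_one_sq_le_sq (θ : ℝ) : ‖exp (θ * I) - 1‖ ^ 2 ≤ θ ^ 2 := by
  have h : ‖exp (θ * I) - 1‖ ≤ |θ| := by
    simpa only [mul_comm (θ : ℂ) I, Real.norm_eq_abs] using Real.norm_exp_I_mul_ofReal_sub_one_le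
  simpa only [sq_abs] using pow_le_pow_left₀ (norm_nonneg _) h 2

lemma norm_exp_ofReal_mul_I_sub_one_sq_le_four (θ : ℝ) : ‖exp (θ * I) - 1‖ ^ 2 ≤ 4 := by
  have h : ‖exp (θ * I) - 1‖ ≤ 2 :=
    (norm_sub_le _ _).trans (by rw [norm_exp_ofReal_mul_I, norm_one]; norm_num)
  exact (pow_le_pow_left₀ (norm_nonneg _) h 2).trans_eq (by norm_num)

end Complex

lemma measurableSet_abs_lt (R : ℝ) : MeasurableSet {t : ℝ | |t| < R} :=
  measurableSet_lt measurable_abs measurable_const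

section TailBound

variable {Φ : ℝ → ℝ} {C₀ : ℝ}

lemma integrableOn_sq_mul_abs_lt (hΦ_int : Integrable Φ) (R : ℝ) :
    IntegrableOn (fun t => t ^ 2 * Φ t) {t : ℝ | |t| < R} :=
  hΦ_int.integrableOn.continuousOn_mul_of_subset (continuous_pow 2).continuousOn
    (isCompact_closedBall 0 R) (measurableSet_abs_lt R)
    fun t ht => by simpa [Real.dist_eq] using (show |t| < R from ht).le

lemma setIntegral_sq_mul_abs_lt_two_mul_le (hΦ_int : Integrable Φ) (hΦ_nonneg : ∀ t, 0 ≤ Φ t)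
    (hΦ_tail : ∀ R ≥ (1 : ℝ), (∫ t in {t : ℝ | R ≤ |t|}, Φ t) ≤ C₀ / R) {S : ℝ} (hS : 1 ≤ S) :
    ∫ t in {t : ℝ | |t| < 2 * S}, t ^ 2 * Φ t
      ≤ (∫ t in {t : ℝ | |t| < S}, t ^ 2 * Φ t) + 4 * C₀ * S := by
  set inner := {t : ℝ | |t| < S}
  set outer := {t : ℝ | |t| < 2 * S}
  have h_sub : inner ⊆ outer := fun t (ht : |t| < S) => show |t| < 2 * S by linarith
  have h_annulus_sub : outer \ inner ⊆ {t : ℝ | S ≤ |t|} :=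
    fun t ht => show S ≤ |t| from not_lt.mp ht.2
  have h_annulus : ∫ t in outer \ inner, t ^ 2 * Φ t ≤ 4 * C₀ * S :=
    calc ∫ t in outer \ inner, t ^ 2 * Φ t
        ≤ ∫ t in outer \ inner, (2 * S) ^ 2 * Φ t := by
          refine setIntegral_mono_on ((integrableOn_sq_mul_abs_lt hΦ_int _).mono_set
            sdiff_subset) (hΦ_int.const_mul _).integrableOn
            ((measurableSet_abs_lt _).diff (measurableSet_abs_lt _)) fun t ht => ?_
          have ht' : |t| < 2 * S := ht.1
          refine mul_le_mul_of_nonneg_right ?_ (hΦ_nonneg t)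
          exact sq_le_sq.mpr (by rw [abs_of_pos (by linarith : 0 < 2 * S)]; exact ht'.le)
      _ = (2 * S) ^ 2 * ∫ t in outer \ inner, Φ t := integral_const_mul _ _
      _ ≤ (2 * S) ^ 2 * (C₀ / S) := by
          gcongr
          exact (setIntegral_mono_set hΦ_int.integrableOn
            (ae_of_all _ hΦ_nonneg) h_annulus_sub.eventuallyLE).trans (hΦ_tail S hS)
      _ = 4 * C₀ * S := by field_simp; ring
  rw [← add_sub_cancel (∫ t in inner, t ^ 2 * Φ t) (∫ t in outer, t ^ 2 * Φ t),
    ← setIntegral_sdiff (measurableSet_abs_lt S) (integrableOn_sq_mul_abs_lt hΦ_int _) h_sub]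
  linarith

lemma setIntegral_sq_mul_abs_lt_two_pow_le (hΦ_int : Integrable Φ) (hΦ_nonneg : ∀ t, 0 ≤ Φ t)
    (hΦ_tail : ∀ R ≥ (1 : ℝ), (∫ t in {t : ℝ | R ≤ |t|}, Φ t) ≤ C₀ / R) (k : ℕ) :
    ∫ t in {t : ℝ | |t| < 2 ^ k}, t ^ 2 * Φ t ≤ (∫ t, Φ t) + 4 * C₀ * (2 ^ k - 1) := by
  induction k with
  | zero =>
    calc ∫ t in {t : ℝ | |t| < 2 ^ 0}, t ^ 2 * Φ t
        ≤ ∫ t in {t : ℝ | |t| < 2 ^ 0}, Φ t := by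
          refine setIntegral_mono_on (integrableOn_sq_mul_abs_lt hΦ_int _)
            hΦ_int.integrableOn (measurableSet_abs_lt _) fun t (ht : |t| < 2 ^ 0) => ?_
          have ht1 : t ^ 2 ≤ 1 := sq_le_one_iff_abs_le_one t |>.mpr (by simpa using ht.le)
          exact (mul_le_mul_of_nonneg_right ht1 (hΦ_nonneg t)).trans_eq (one_mul _)
      _ ≤ ∫ t, Φ t := setIntegral_le_integral hΦ_int (ae_of_all _ hΦ_nonneg)
      _ = (∫ t, Φ t) + 4 * C₀ * (2 ^ 0 - 1) := by ring
  | succ k ih =>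
    have h := setIntegral_sq_mul_abs_lt_two_mul_le hΦ_int hΦ_nonneg hΦ_tail
      (one_le_pow₀ (one_le_two : (1 : ℝ) ≤ 2) (n := k))
    rw [← pow_succ'] at h
    have h_telescope : 4 * C₀ * (2 ^ (k + 1) - 1) = 4 * C₀ * (2 ^ k - 1) + 4 * C₀ * 2 ^ k := by
      ring
    linarith

lemma setIntegral_sq_mul_abs_lt_le (hΦ_int : Integrable Φ) (hΦ_nonneg : ∀ t, 0 ≤ Φ t)
    (hC₀ : 0 ≤ C₀) (hΦ_tail : ∀ R ≥ (1 : ℝ), (∫ t in {t : ℝ | R ≤ |t|}, Φ t) ≤ C₀ / R)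
    {R : ℝ} (hR : 1 ≤ R) :
    ∫ t in {t : ℝ | |t| < R}, t ^ 2 * Φ t ≤ (∫ t, Φ t) + 8 * C₀ * R := by
  obtain ⟨n, hnR, hRn⟩ := exists_nat_pow_near hR one_lt_two
  calc ∫ t in {t : ℝ | |t| < R}, t ^ 2 * Φ t
      ≤ ∫ t in {t : ℝ | |t| < 2 ^ (n + 1)}, t ^ 2 * Φ t := by
        refine setIntegral_mono_set (integrableOn_sq_mul_abs_lt hΦ_int _)
          (ae_of_all _ fun t => mul_nonneg (sq_nonneg t) (hΦ_nonneg t))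
          (Filter.Eventually.of_forall fun t (ht : |t| < R) => ?_)
        exact show |t| < 2 ^ (n + 1) by linarith
    _ ≤ (∫ t, Φ t) + 4 * C₀ * (2 ^ (n + 1) - 1) :=
        setIntegral_sq_mul_abs_lt_two_pow_le hΦ_int hΦ_nonneg hΦ_tail _
    _ ≤ (∫ t, Φ t) + 8 * C₀ * R := by rw [pow_succ]; nlinarith

lemma integral_mul_le_of_le_sq_of_le (hΦ_int : Integrable Φ) (hΦ_nonneg : ∀ t, 0 ≤ Φ t)
    (hC₀ : 0 ≤ C₀) (hΦ_tail : ∀ R ≥ (1 : ℝ), (∫ t in {t : ℝ | R ≤ |t|}, Φ t) ≤ C₀ / R)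
    {w : ℝ → ℝ} {c M R : ℝ} (hw_meas : AEStronglyMeasurable w) (hw_nonneg : ∀ t, 0 ≤ w t)
    (hw_sq : ∀ t, w t ≤ c * t ^ 2) (hw_le : ∀ t, w t ≤ M) (hR : 1 ≤ R) :
    ∫ t, w t * Φ t ≤ c * ((∫ t, Φ t) + 8 * C₀ * R) + M * C₀ / R := by
  have hc : 0 ≤ c := by simpa using (hw_nonneg 1).trans (hw_sq 1)
  have hM : 0 ≤ M := (hw_nonneg 0).trans (hw_le 0)
  have h_int : Integrable fun t => w t * Φ t :=
    hΦ_int.bdd_mul hw_meas <| ae_of_all _ fun t => by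
      rw [Real.norm_eq_abs, abs_of_nonneg (hw_nonneg t)]; exact hw_le t
  have h_compl : {t : ℝ | |t| < R}ᶜ = {t : ℝ | R ≤ |t|} := by ext; simp
  rw [← integral_add_compl (measurableSet_abs_lt R) h_int, h_compl]
  refine add_le_add ?_ ?_
  · calc ∫ t in {t : ℝ | |t| < R}, w t * Φ t
        ≤ ∫ t in {t : ℝ | |t| < R}, c * (t ^ 2 * Φ t) :=
          setIntegral_mono_on h_int.integrableOn
            ((integrableOn_sq_mul_abs_lt hΦ_int R).const_mul c) (measurableSet_abs_lt R)
            fun t _ => by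
              rw [← mul_assoc]; exact mul_le_mul_of_nonneg_right (hw_sq t) (hΦ_nonneg t)
      _ = c * ∫ t in {t : ℝ | |t| < R}, t ^ 2 * Φ t := integral_const_mul _ _
      _ ≤ c * ((∫ t, Φ t) + 8 * C₀ * R) := by
          gcongr
          exact setIntegral_sq_mul_abs_lt_le hΦ_int hΦ_nonneg hC₀ hΦ_tail hR
  · calc ∫ t in {t : ℝ | R ≤ |t|}, w t * Φ t
        ≤ ∫ t in {t : ℝ | R ≤ |t|}, M * Φ t :=
          setIntegral_mono_on h_int.integrableOn (hΦ_int.const_mul M).integrableOn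
            (measurableSet_le measurable_const measurable_abs)
            fun t _ => mul_le_mul_of_nonneg_right (hw_le t) (hΦ_nonneg t)
      _ = M * ∫ t in {t : ℝ | R ≤ |t|}, Φ t := integral_const_mul _ _
      _ ≤ M * (C₀ / R) := by gcongr; exact hΦ_tail R hR
      _ = M * C₀ / R := by ring

end TailBound

open MeasureTheory in
/-- If `Φ ≥ 0` is integrable with `∫_{|t| ≥ R} Φ ≤ C₀/R` for `R ≥ 1`, then there is `C > 0`
with `∫ |e^{2πitξ} - 1|² Φ(t) dt ≤ C|ξ|` for all `ξ`. -/
theorem balanced_rigidity_stmt13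
    (Φ : ℝ → ℝ) (hΦ_int : Integrable Φ) (hΦ_nonneg : ∀ t, 0 ≤ Φ t)
    (C₀ : ℝ) (hC₀ : 0 < C₀)
    (hΦ_tail : ∀ R ≥ (1 : ℝ), (∫ t in {t : ℝ | R ≤ |t|}, Φ t) ≤ C₀ / R) :
    ∃ C > (0 : ℝ), ∀ ξ : ℝ,
      (∫ t : ℝ, ‖Complex.exp (2 * Real.pi * t * ξ * Complex.I) - 1‖ ^ 2 * Φ t)
        ≤ C * |ξ| := by
  set I := ∫ t, Φ t
  have hI : 0 ≤ I := integral_nonneg hΦ_nonneg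
  refine ⟨4 * (Real.pi ^ 2 + 1) * (I + 8 * C₀), by positivity, fun ξ => ?_⟩
  set w : ℝ → ℝ := fun t => ‖Complex.exp (2 * Real.pi * t * ξ * Complex.I) - 1‖ ^ 2
  have hw_eq (t : ℝ) :
      w t = ‖Complex.exp (((2 * Real.pi * ξ * t : ℝ) : ℂ) * Complex.I) - 1‖ ^ 2 := by
    simp only [w]; push_cast; ring_nf
  have hw_meas : AEStronglyMeasurable w := (by fun_prop : Continuous w).aestronglyMeasurable
  have hw_sq (t : ℝ) : w t ≤ (2 * Real.pi * ξ) ^ 2 * t ^ 2 := by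
    rw [hw_eq, ← mul_pow]; exact Complex.norm_exp_ofReal_mul_I_sub_one_sq_le_sq _
  have hw_le (t : ℝ) : w t ≤ 4 := by
    rw [hw_eq]; exact Complex.norm_exp_ofReal_mul_I_sub_one_sq_le_four _
  rcases lt_or_ge |ξ| 1 with hξ | hξ
  · rcases eq_or_ne ξ 0 with rfl | hξ0
    · simp
    have hξ_pos : 0 < |ξ| := abs_pos.mpr hξ0
    calc ∫ t, w t * Φ t
        ≤ (2 * Real.pi * ξ) ^ 2 * (I + 8 * C₀ * |ξ|⁻¹) + 4 * C₀ / |ξ|⁻¹ :=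
          integral_mul_le_of_le_sq_of_le hΦ_int hΦ_nonneg hC₀.le hΦ_tail hw_meas
            (fun t => sq_nonneg _) hw_sq hw_le (one_le_inv₀ hξ_pos |>.mpr hξ.le)
      _ ≤ 4 * (Real.pi ^ 2 + 1) * (I + 8 * C₀) * |ξ| := by
          rw [mul_pow, ← sq_abs ξ]
          field_simp
          nlinarith [mul_le_mul_of_nonneg_right hξ.le hI, sq_nonneg Real.pi]
  · calc ∫ t, w t * Φ t
        ≤ ∫ t, 4 * Φ t :=
          integral_mono_of_nonneg (ae_of_all _ fun t => mul_nonneg (sq_nonneg _) (hΦ_nonneg t))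
            (hΦ_int.const_mul 4)
            (ae_of_all _ fun t => mul_le_mul_of_nonneg_right (hw_le t) (hΦ_nonneg t))
      _ = 4 * I := integral_const_mul _ _
      _ ≤ 4 * (Real.pi ^ 2 + 1) * (I + 8 * C₀) * 1 := by nlinarith [sq_nonneg Real.pi]
      _ ≤ 4 * (Real.pi ^ 2 + 1) * (I + 8 * C₀) * |ξ| := by gcongr
end

section
/- Let A : ℝ → ℝ be measurable with ∫_{−∞}^0 A(y)² dy < ∞, let F : ℝ → ℂ be measurable with ∫_{−∞}^0 |F(y)|² dy < ∞, and let c ∈ ℂ. Assume that for every x > 0 one has A(x) ≠ 0 and A(x) ∫_{−∞}^0 A(y) F(y)/(x − y) dy = c A(x) − F(x). Then for all x > 0 and p > 0 with x ≠ p: A(x) ∫_{−∞}^0 A(y) F(y) / ((x − y)(y − p)) dy = (1/(x − p)) ( A(x) F(p)/A(p) − F(x) ). -/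
open MeasureTheory in
lemma balanced_rigidity_stmt18_aux (A : ℝ → ℝ) (hA : Measurable A)
    (hA2 : IntegrableOn (fun y : ℝ => A y ^ 2) (Set.Iio 0))
    (F : ℝ → ℂ) (hF : Measurable F)
    (hF2 : IntegrableOn (fun y : ℝ => ‖F y‖ ^ 2) (Set.Iio 0))
    (x : ℝ) (hx : 0 < x) :
    IntegrableOn (fun y : ℝ => (A y : ℂ) * F y / ((x : ℂ) - (y : ℂ))) (Set.Iio 0) := by
  have hmeas : AEStronglyMeasurable (fun y : ℝ => (A y : ℂ) * F y / ((x : ℂ) - (y : ℂ)))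
      (volume.restrict (Set.Iio 0)) := by
    apply Measurable.aestronglyMeasurable
    exact ((Complex.measurable_ofReal.comp hA).mul hF).div
      (measurable_const.sub Complex.measurable_ofReal)
  have hbound : IntegrableOn (fun y : ℝ => (A y ^ 2 + ‖F y‖ ^ 2) / (2 * x)) (Set.Iio 0) :=
    (hA2.add hF2).div_const _
  refine Integrable.mono' hbound hmeas ?_
  rw [ae_restrict_iff' measurableSet_Iio]
  filter_upwards with y hy
  have hy0 : y < 0 := hy
  have h1 : ‖(x : ℂ) - (y : ℂ)‖ = x - y := by
    rw [← Complex.ofReal_sub, Complex.norm_real, Real.norm_eq_abs, abs_of_pos (by linarith)]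
  rw [norm_div, h1, norm_mul, Complex.norm_real, Real.norm_eq_abs]
  have hle : |A y| * ‖F y‖ ≤ (A y ^ 2 + ‖F y‖ ^ 2) / 2 := by
    nlinarith [sq_nonneg (|A y| - ‖F y‖), sq_abs (A y), norm_nonneg (F y), abs_nonneg (A y)]
  have hcalc : |A y| * ‖F y‖ / (x - y) ≤ ((A y ^ 2 + ‖F y‖ ^ 2) / 2) / x := by
    apply div_le_div₀ (by positivity) hle hx (by linarith)
  calc |A y| * ‖F y‖ / (x - y) ≤ ((A y ^ 2 + ‖F y‖ ^ 2) / 2) / x := hcalc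
    _ = (A y ^ 2 + ‖F y‖ ^ 2) / (2 * x) := by ring

open MeasureTheory in
/-- If `A(x) ∫_{-∞}^0 A(y)F(y)/(x-y) dy = c A(x) - F(x)` for all `x > 0` (with `A(x) ≠ 0`),
then for all `x, p > 0` with `x ≠ p` one has
`A(x) ∫_{-∞}^0 A(y)F(y)/((x-y)(y-p)) dy = (1/(x-p)) (A(x)F(p)/A(p) - F(x))`. -/
theorem balanced_rigidity_stmt18
    (A : ℝ → ℝ) (hA : Measurable A)
    (hA2 : IntegrableOn (fun y : ℝ => A y ^ 2) (Set.Iio 0))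
    (F : ℝ → ℂ) (hF : Measurable F)
    (hF2 : IntegrableOn (fun y : ℝ => ‖F y‖ ^ 2) (Set.Iio 0))
    (c : ℂ)
    (hAne : ∀ x : ℝ, 0 < x → A x ≠ 0)
    (heq : ∀ x : ℝ, 0 < x →
      (A x : ℂ) * ∫ y in Set.Iio (0 : ℝ), (A y : ℂ) * F y / ((x : ℂ) - (y : ℂ))
        = c * (A x : ℂ) - F x) :
    ∀ x p : ℝ, 0 < x → 0 < p → x ≠ p →
      (A x : ℂ) * ∫ y in Set.Iio (0 : ℝ),
          (A y : ℂ) * F y / (((x : ℂ) - (y : ℂ)) * ((y : ℂ) - (p : ℂ)))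
        = (1 / ((x : ℂ) - (p : ℂ))) * ((A x : ℂ) * F p / (A p : ℂ) - F x) := by
  intro x p hx hp hxp
  have hIx := balanced_rigidity_stmt18_aux A hA hA2 F hF hF2 x hx
  have hIp := balanced_rigidity_stmt18_aux A hA hA2 F hF hF2 p hp
  have hxp' : (x : ℂ) - (p : ℂ) ≠ 0 := by
    rw [← Complex.ofReal_sub, Complex.ofReal_ne_zero]
    exact sub_ne_zero.mpr hxp
  have key : ∀ y ∈ Set.Iio (0:ℝ),
      (A y : ℂ) * F y / (((x:ℂ) - (y:ℂ)) * ((y:ℂ) - (p:ℂ)))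
        = (1/((x:ℂ)-(p:ℂ))) * ((A y : ℂ) * F y / ((x:ℂ) - (y:ℂ))
            - (A y : ℂ) * F y / ((p:ℂ) - (y:ℂ))) := by
    intro y hy
    have hy0 : y < 0 := hy
    have h1 : (x:ℂ) - (y:ℂ) ≠ 0 := by
      rw [← Complex.ofReal_sub, Complex.ofReal_ne_zero]; intro h; linarith [sub_eq_zero.mp h]
    have h2 : (y:ℂ) - (p:ℂ) ≠ 0 := by
      rw [← Complex.ofReal_sub, Complex.ofReal_ne_zero]; intro h; linarith [sub_eq_zero.mp h]
    have h3 : (p:ℂ) - (y:ℂ) ≠ 0 := by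
      rw [← Complex.ofReal_sub, Complex.ofReal_ne_zero]; intro h; linarith [sub_eq_zero.mp h]
    field_simp
    ring
  rw [setIntegral_congr_fun measurableSet_Iio key, integral_const_mul,
    integral_sub hIx hIp]
  have hAx : (A x : ℂ) ≠ 0 := by
    rw [Complex.ofReal_ne_zero]; exact hAne x hx
  have hAp : (A p : ℂ) ≠ 0 := by
    rw [Complex.ofReal_ne_zero]; exact hAne p hp
  have hIxv : (∫ y in Set.Iio (0:ℝ), (A y : ℂ) * F y / ((x:ℂ) - (y:ℂ)))
      = c - F x / A x := by
    have h := heq x hx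
    field_simp
    linear_combination h
  have hIpv : (∫ y in Set.Iio (0:ℝ), (A y : ℂ) * F y / ((p:ℂ) - (y:ℂ)))
      = c - F p / A p := by
    have h := heq p hp
    field_simp
    linear_combination h
  rw [hIxv, hIpv]
  field_simp
  ring
end
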